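/- The smallest eigenvalue of A(ν) satisfies α_1(ν) ~ L·ν^{1−L} as ν → ∞, i.e., ν^{L−1}·α_1(ν) → L. -/

import Mathlib

open Filter

/-- The `L×L` matrix `A(ν)`: the negative of the generator, restricted to the
transient states `{1,…,L}`, of the birth–death process on `{0,1,…,L}` in which
state `l` has birth rate `(L−l)ν` and death rate `l`, and state `0` is
absorbing.  Index `i : Fin L` represents the state `l = i + 1`. -/
noncomputable def birthDeathMat (L : ℕ) (ν : ℝ) : Matrix (Fin L) (Fin L) ℝ :=
  Matrix.of fun i j =>
    if j = i then ((L : ℝ) - ((i : ℕ) + 1)) * ν + ((i : ℕ) + 1)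
    else if (j : ℕ) = (i : ℕ) + 1 then -(((L : ℝ) - ((i : ℕ) + 1)) * ν)
    else if (j : ℕ) + 1 = (i : ℕ) then -(((i : ℕ) + 1 : ℝ))
    else 0

/-!
Let `D_n(x)` (`birthDeathMinor`) be the leading `n × n` principal minor of `A(ν) - x`.
Expanding along the last row gives a three-term recurrence for `D_n`, from which
`D_n(x) - (L - n)ν D_{n-1}(x) = n! - x S_n(x)` with `S_n = ∑_{j<n} n!/(j+1)! D_j`
(`birthDeathMinorSum`, defined by the equivalent recursion `S_{n+1} = (n+1) S_n + D_n`);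
at `n = L` this reads `det (A(ν) - x) = L! - x S_L(x)`, so `α₁ S_L(α₁) = L!`.
Since `det A(ν) = L!` is the product of the eigenvalues, `α₁ ≤ L!` stays bounded. Then
`D_j(α₁) ~ (L-1)⋯(L-j) ν^j`, hence `S_L(α₁) ~ D_{L-1}(α₁) ~ (L-1)! ν^{L-1}`, and
`ν^{L-1} α₁ = L! ν^{L-1} / S_L(α₁) → L!/(L-1)! = L`.
-/

open Matrix Polynomial Topology Nat

namespace Matrix

section Tridiagonal

variable {R : Type*} [CommRing R] (a b c : ℕ → R)

def tridiagonal (n : ℕ) : Matrix (Fin n) (Fin n) R :=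
  of fun i j =>
    if (j : ℕ) = i then a i else if (j : ℕ) = i + 1 then b i else if (j : ℕ) + 1 = i then c j
    else 0

theorem tridiagonal_apply_eq_zero {n : ℕ} {i j : Fin n}
    (h : (i : ℕ) + 1 < j ∨ (j : ℕ) + 1 < i) : tridiagonal a b c n i j = 0 := by
  simp only [tridiagonal, of_apply]
  split_ifs <;> first | rfl | omega

theorem det_tridiagonal_succ_succ (n : ℕ) :
    (tridiagonal a b c (n + 2)).det =
      a (n + 1) * (tridiagonal a b c (n + 1)).det - b n * c n * (tridiagonal a b c n).det := by
  have hlast : (tridiagonal a b c (n + 2)).submatrix (Fin.last (n + 1)).succAbove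
      (Fin.last (n + 1)).succAbove = tridiagonal a b c (n + 1) := by
    ext i j
    simp [tridiagonal]
  have hnext : ((tridiagonal a b c (n + 2)).submatrix (Fin.last (n + 1)).succAbove
      (Fin.last n).castSucc.succAbove).submatrix (Fin.last n).succAbove (Fin.last n).succAbove =
      tridiagonal a b c n := by
    ext i j
    simp [tridiagonal, Fin.succAbove_of_castSucc_lt _ _
      (Fin.castSucc_lt_castSucc_iff.mpr j.castSucc_lt_last)]
  rw [det_succ_row _ (Fin.last (n + 1)), Fin.sum_univ_castSucc, Fin.sum_univ_castSucc,
    Finset.sum_eq_zero fun j _ => by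
      rw [tridiagonal_apply_eq_zero a b c (Or.inr (by simp)), mul_zero, zero_mul],
    det_succ_column _ (Fin.last n), Fin.sum_univ_castSucc,
    Finset.sum_eq_zero fun i _ => by
      rw [submatrix_apply,
        tridiagonal_apply_eq_zero a b c (Or.inl (by simp [Fin.succAbove, Fin.lt_def])),
        mul_zero, zero_mul],
    hlast, hnext]
  have hsign : (-1 : R) ^ (n + 1 + n) = -1 := Odd.neg_one_pow ⟨n, by ring⟩
  simp [tridiagonal, hsign, ← two_mul, show n ≠ n + 1 + 1 by omega]
  ring

end Tridiagonal

section Spectrum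

variable {n K : Type*} [Fintype n] [DecidableEq n] [Field K]

theorem det_sub_scalar_eq_zero_of_mem_spectrum {A : Matrix n n K} {μ : K}
    (hμ : μ ∈ spectrum K A) : (A - scalar n μ).det = 0 := by
  rw [mem_spectrum_iff_isRoot_charpoly, IsRoot, eval_charpoly] at hμ
  rw [← neg_sub, det_neg, hμ, mul_zero]

theorem det_eq_prod_of_injective_of_mem_spectrum {A : Matrix n n K} {μ : n → K}
    (hinj : Function.Injective μ) (hμ : ∀ i, μ i ∈ spectrum K A) : A.det = ∏ i, μ i := by
  have hne : A.charpoly ≠ 0 := A.charpoly_monic.ne_zero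
  have hle : Finset.univ.val.map μ ≤ A.charpoly.roots :=
    (Multiset.le_iff_subset (Finset.univ.nodup.map hinj)).mpr fun r hr => by
      obtain ⟨i, -, rfl⟩ := Multiset.mem_map.mp hr
      exact (mem_roots hne).mpr (mem_spectrum_iff_isRoot_charpoly.mp (hμ i))
  have hroots : Finset.univ.val.map μ = A.charpoly.roots :=
    Multiset.eq_of_le_of_card_le hle (by
      simpa [charpoly_natDegree_eq_dim] using A.charpoly.card_roots')
  have hsplit : A.charpoly.Splits := by
    rw [splits_iff_card_roots, ← hroots, charpoly_natDegree_eq_dim]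
    simp
  rw [det_eq_prod_roots_charpoly_of_splits hsplit, ← hroots]
  rfl

theorem pow_card_le_det_of_le_mem_spectrum {A : Matrix n n ℝ} {μ : n → ℝ}
    (hinj : Function.Injective μ) (hμ : ∀ i, μ i ∈ spectrum ℝ A) {c : ℝ} (hc : 0 ≤ c)
    (hle : ∀ i, c ≤ μ i) : c ^ Fintype.card n ≤ A.det := by
  rw [det_eq_prod_of_injective_of_mem_spectrum hinj hμ, ← Finset.card_univ, ← Finset.prod_const]
  exact Finset.prod_le_prod (fun _ _ => hc) fun i _ => hle i

end Spectrum

end Matrix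

section BirthDeathMinor

variable (L : ℕ) (ν x : ℝ)

noncomputable def birthDeathMinor (n : ℕ) : ℝ :=
  (tridiagonal (fun i => ((L : ℝ) - (i + 1)) * ν + (i + 1) - x)
    (fun i => -(((L : ℝ) - (i + 1)) * ν)) (fun i => -((i : ℝ) + 2)) n).det

noncomputable def birthDeathMinorSum : ℕ → ℝ
  | 0 => 0
  | n + 1 => (n + 1) * birthDeathMinorSum n + birthDeathMinor L ν x n

theorem det_birthDeathMat_sub_scalar_eq_birthDeathMinor :
    (birthDeathMat L ν - scalar (Fin L) x).det = birthDeathMinor L ν x L := by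
  rw [birthDeathMinor]
  congr 1
  ext i j
  rcases eq_or_ne j i with rfl | hne
  · simp [birthDeathMat, tridiagonal]
  · simp only [birthDeathMat, tridiagonal, Matrix.sub_apply, scalar_apply,
      diagonal_apply_ne' _ hne, of_apply, if_neg hne, if_neg (Fin.val_ne_of_ne hne), sub_zero]
    split_ifs with _ hsub
    · rfl
    · rw [← hsub]; push_cast; ring
    · rfl

@[simp] theorem birthDeathMinor_zero : birthDeathMinor L ν x 0 = 1 := det_fin_zero

theorem birthDeathMinor_one : birthDeathMinor L ν x 1 = ((L : ℝ) - 1) * ν + 1 - x := by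
  simp [birthDeathMinor, tridiagonal]

theorem birthDeathMinor_succ_succ (n : ℕ) :
    birthDeathMinor L ν x (n + 2) =
      (((L : ℝ) - (n + 2)) * ν + (n + 2) - x) * birthDeathMinor L ν x (n + 1) -
        (n + 2) * (((L : ℝ) - (n + 1)) * ν) * birthDeathMinor L ν x n := by
  rw [birthDeathMinor, det_tridiagonal_succ_succ, ← birthDeathMinor, ← birthDeathMinor]
  push_cast
  ring

theorem birthDeathMinor_succ_sub (n : ℕ) :
    birthDeathMinor L ν x (n + 1) - ((L : ℝ) - (n + 1)) * ν * birthDeathMinor L ν x n =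
      (n + 1)! - x * birthDeathMinorSum L ν x (n + 1) := by
  induction n with
  | zero => simp [birthDeathMinor_one, birthDeathMinorSum]; ring
  | succ n ih =>
    rw [birthDeathMinor_succ_succ, birthDeathMinorSum, Nat.factorial_succ (n + 1)]
    push_cast at ih ⊢
    linear_combination (n + 2 : ℝ) * ih

theorem det_birthDeathMat_sub_scalar :
    (birthDeathMat L ν - scalar (Fin L) x).det = (L ! : ℝ) - x * birthDeathMinorSum L ν x L := by
  rw [det_birthDeathMat_sub_scalar_eq_birthDeathMinor]
  cases L with
  | zero => simp [birthDeathMinorSum]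
  | succ n => simpa using birthDeathMinor_succ_sub (n + 1) ν x n

end BirthDeathMinor

section Asymptotics

variable (L : ℕ) {x : ℝ → ℝ}

theorem tendsto_birthDeathMinor_div_pow (hx : Tendsto (fun ν => x ν / ν) atTop (𝓝 0)) (m : ℕ) :
    Tendsto (fun ν => birthDeathMinor L ν (x ν) m / ν ^ m) atTop
      (𝓝 ((descPochhammer ℝ m).eval ((L : ℝ) - 1))) := by
  have hinv : Tendsto (fun ν : ℝ => ν⁻¹) atTop (𝓝 0) := tendsto_inv_atTop_zero
  have hcorr (c : ℝ) : Tendsto (fun ν => (c - x ν) / ν) atTop (𝓝 0) := by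
    have h := (hinv.const_mul c).sub hx
    rw [mul_zero, sub_zero] at h
    exact h.congr fun ν => by ring
  induction m using Nat.twoStepInduction with
  | zero => simp
  | one =>
    have key := (tendsto_const_nhds (x := (L : ℝ) - 1)).add (hcorr 1)
    rw [add_zero] at key
    rw [descPochhammer_one, eval_X]
    refine key.congr' ?_
    filter_upwards [eventually_ne_atTop 0] with ν hν
    rw [birthDeathMinor_one]
    field_simp
    ring
  | more m ih₀ ih₁ =>
    have key := (((tendsto_const_nhds (x := (L : ℝ) - (m + 2))).add (hcorr (m + 2))).mul ih₁).sub
      ((hinv.const_mul ((m + 2) * ((L : ℝ) - (m + 1)))).mul ih₀)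
    rw [descPochhammer_succ_eval]
    convert key.congr' ?_ using 2
    · push_cast
      ring
    filter_upwards [eventually_ne_atTop 0] with ν hν
    rw [birthDeathMinor_succ_succ]
    field_simp
    ring

theorem tendsto_birthDeathMinorSum_div_pow (hx : Tendsto (fun ν => x ν / ν) atTop (𝓝 0))
    (m : ℕ) :
    Tendsto (fun ν => birthDeathMinorSum L ν (x ν) (m + 1) / ν ^ m) atTop
      (𝓝 ((descPochhammer ℝ m).eval ((L : ℝ) - 1))) := by
  induction m with
  | zero => simp [birthDeathMinorSum]
  | succ m ih =>
    have key := ((ih.const_mul ((m : ℝ) + 2)).mul tendsto_inv_atTop_zero).add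
      (tendsto_birthDeathMinor_div_pow L hx (m + 1))
    rw [mul_zero, zero_add] at key
    refine key.congr' ?_
    filter_upwards [eventually_ne_atTop 0] with ν hν
    rw [birthDeathMinorSum.eq_2 _ _ _ (m + 1)]
    field_simp
    push_cast
    ring

end Asymptotics

section Eigenvalues

variable {ν : ℝ}

theorem mul_birthDeathMinorSum_of_mem_spectrum {L : ℕ} {μ : ℝ}
    (hμ : μ ∈ spectrum ℝ (birthDeathMat L ν)) : μ * birthDeathMinorSum L ν μ L = L ! := by
  have h := det_sub_scalar_eq_zero_of_mem_spectrum hμ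
  rw [det_birthDeathMat_sub_scalar] at h
  linarith

theorem le_factorial_of_mem_spectrum_birthDeathMat {K : ℕ} {μ : Fin (K + 1) → ℝ}
    (hmono : StrictMono μ) (hμ : ∀ i, μ i ∈ spectrum ℝ (birthDeathMat (K + 1) ν))
    (hpos : 0 ≤ μ 0) : μ 0 ≤ (K + 1)! := by
  have hdet : (birthDeathMat (K + 1) ν).det = (K + 1)! := by
    simpa using det_birthDeathMat_sub_scalar (K + 1) ν 0
  have hpow : μ 0 ^ (K + 1) ≤ (K + 1)! := by
    simpa [hdet] using pow_card_le_det_of_le_mem_spectrum hmono.injective hμ hpos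
      fun i => hmono.monotone (Fin.zero_le i)
  rcases le_total (μ 0) 1 with h | h
  · exact h.trans (by exact_mod_cast (K + 1).factorial_pos)
  · exact (le_self_pow₀ h (by omega)).trans hpow

end Eigenvalues

/-- Let `0 < α_1(ν) < ⋯ < α_L(ν)` denote the (real, distinct, strictly
positive) eigenvalues of `A(ν)`, for `ν > 0`.  Then
`α_1(ν) ~ L·ν^{1−L}` as `ν → ∞`, i.e. `ν^{L−1}·α_1(ν) → L`. -/
theorem birthDeathMat_smallest_eigenvalue_asymptotics (L : ℕ) (hL : 1 ≤ L)
    (α : ℝ → Fin L → ℝ)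
    (hα : ∀ ν : ℝ, 0 < ν → StrictMono (α ν) ∧ (∀ i, 0 < α ν i) ∧
      spectrum ℝ (birthDeathMat L ν) = Set.range (α ν)) :
    Tendsto (fun ν : ℝ => ν ^ (L - 1) * α ν ⟨0, by omega⟩)
      atTop (nhds (L : ℝ)) := by
  obtain ⟨K, rfl⟩ : ∃ K, L = K + 1 := ⟨L - 1, by omega⟩
  have hspec (ν : ℝ) (hν : 0 < ν) (i : Fin (K + 1)) :
      α ν i ∈ spectrum ℝ (birthDeathMat (K + 1) ν) := by
    rw [(hα ν hν).2.2]
    exact Set.mem_range_self i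
  have hsmall : Tendsto (fun ν => α ν 0 / ν) atTop (𝓝 0) := by
    refine tendsto_of_tendsto_of_tendsto_of_le_of_le' tendsto_const_nhds
      ((tendsto_const_nhds (x := ((K + 1)! : ℝ))).div_atTop tendsto_id) ?_ ?_ <;>
      filter_upwards [eventually_gt_atTop 0] with ν hν
    · exact div_nonneg ((hα ν hν).2.1 0).le hν.le
    · exact div_le_div_of_nonneg_right (le_factorial_of_mem_spectrum_birthDeathMat (hα ν hν).1
        (hspec ν hν) ((hα ν hν).2.1 0).le) hν.le
  have hS := tendsto_birthDeathMinorSum_div_pow (K + 1) hsmall K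
  rw [show ((K + 1 : ℕ) : ℝ) - 1 = K by push_cast; ring, descPochhammer_eval_eq_descFactorial,
    Nat.descFactorial_self] at hS
  have hlim : Tendsto (fun ν => ((K + 1)! : ℝ) / (birthDeathMinorSum (K + 1) ν (α ν 0) (K + 1) /
      ν ^ K)) atTop (𝓝 ((K + 1 : ℕ) : ℝ)) := by
    rw [← mul_div_cancel_right₀ ((K + 1 : ℕ) : ℝ) (by positivity : (K ! : ℝ) ≠ 0), ← Nat.cast_mul,
      ← Nat.factorial_succ]
    exact tendsto_const_nhds.div hS (by positivity)
  refine hlim.congr' ?_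
  filter_upwards [eventually_gt_atTop 0] with ν hν
  have hroot := mul_birthDeathMinorSum_of_mem_spectrum (hspec ν hν 0)
  have hsum : birthDeathMinorSum (K + 1) ν (α ν 0) (K + 1) ≠ 0 :=
    right_ne_zero_of_mul (hroot.trans_ne (by positivity))
  rw [← hroot, Nat.add_sub_cancel]
  field_simp
  rfl
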